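/- Let α, β, γ, δ, ε ∈ ℂ with γ ∉ {0, −1, −2, −3, …}. Then there exists a real-analytic function v : (−1,1) → ℂ, given by a power series centered at 0 converging on (−1,1), such that v satisfies the Heun equation with parameters (α, β, γ, δ, ε) at every x ∈ (−1,1), and v is normalized by v(0) = 1; moreover v'(0) = −ε/γ and v''(0) = (1/(1+γ))·((ε/γ)(β+ε) − δ). -/

import Mathlib

open Set

namespace HeunFro
noncomputable def hA (α β γ δ ε : ℂ) : ℕ → ℂ
  | 0 => 1
  | 1 => -ε / γ
  | (n+2) => ((((n : ℂ)+1)*(n : ℂ) - β*((n : ℂ)+1) - ε) * hA α β γ δ ε (n+1)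
      - (α*(n : ℂ) + δ) * hA α β γ δ ε n) / (((n : ℂ)+2)*(((n : ℂ)+1)+γ))

variable {α β γ δ ε : ℂ}

lemma hγ0 (hγ : ∀ n : ℕ, γ ≠ -(n : ℂ)) : γ ≠ 0 := by simpa using hγ 0

lemma hden (hγ : ∀ n : ℕ, γ ≠ -(n : ℂ)) (n : ℕ) : ((n : ℂ)+2)*(((n : ℂ)+1)+γ) ≠ 0 := by
  apply mul_ne_zero
  · have : ((n : ℂ) + 2) = ((n + 2 : ℕ) : ℂ) := by push_cast; ring
    rw [this]
    exact Nat.cast_ne_zero.2 (Nat.succ_ne_zero _)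
  · intro h
    apply hγ (n+1)
    push_cast
    linear_combination h

lemma hrec (hγ : ∀ n : ℕ, γ ≠ -(n : ℂ)) (n : ℕ) :
    (((n : ℂ)+2)*(((n : ℂ)+1)+γ)) * hA α β γ δ ε (n+2)
      = (((n : ℂ)+1)*(n : ℂ) - β*((n : ℂ)+1) - ε) * hA α β γ δ ε (n+1)
        - (α*(n : ℂ) + δ) * hA α β γ δ ε n := by
  rw [show n + 2 = n + 2 from rfl, hA]
  exact mul_div_cancel₀ _ (hden hγ n)

private lemma keyineq (q K m : ℝ) (hq : 1 < q) (hK : 1 ≤ K) (h1 : K + 3 ≤ m)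
    (h2 : 8*q*K ≤ (q-1)*m) :
    ((m+1)*m + K*(m+1) + K) * q + (K*m + K) ≤ q^2 * ((m+2)*(m+1-K)) := by
  have hq0 : (0:ℝ) ≤ q := by linarith
  have hK0 : (0:ℝ) ≤ K := by linarith
  have hm0 : (0:ℝ) ≤ m := by linarith
  have hm3 : (3:ℝ) ≤ m := by linarith
  have A : q^2*m^2 - q^2*K*(m+2) ≤ q^2*((m+2)*(m+1-K)) := by
    nlinarith [mul_nonneg (sq_nonneg q) hm0, sq_nonneg q]
  have B : ((m+1)*m + K*(m+1) + K) * q + (K*m + K) ≤ q*m^2 + 3*(q*K*(m+3)) := by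
    nlinarith [mul_nonneg (mul_nonneg hq0 hK0) hm0,
      mul_nonneg (mul_nonneg hq0 (by linarith : (0:ℝ) ≤ K-1)) hm0,
      mul_nonneg (mul_nonneg (by linarith : (0:ℝ) ≤ q-1) hK0) (by linarith : (0:ℝ) ≤ m+1),
      mul_nonneg (mul_nonneg hq0 hK0) (by linarith : (0:ℝ) ≤ m+4)]
  have h2' : 8*q*K*(q*m) ≤ (q-1)*m*(q*m) :=
    mul_le_mul_of_nonneg_right h2 (mul_nonneg hq0 hm0)
  have C : q*m^2 + 3*(q*K*(m+3)) ≤ q^2*m^2 - q^2*K*(m+2) := by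
    nlinarith [h2', mul_nonneg (mul_nonneg hq0 hK0) hm0,
      mul_nonneg (mul_nonneg (mul_nonneg hq0 hq0) hK0) (by linarith : (0:ℝ) ≤ m-2),
      mul_nonneg (mul_nonneg (mul_nonneg (by linarith : (0:ℝ) ≤ q-1) hq0) hK0) hm0,
      mul_nonneg (mul_nonneg hq0 hK0) (by linarith : (0:ℝ) ≤ m-3)]
  linarith

lemma growth (hγ : ∀ n : ℕ, γ ≠ -(n : ℂ)) (q : ℝ) (hq : 1 < q) :
    ∃ C : ℝ, 0 < C ∧ ∀ n : ℕ, ‖hA α β γ δ ε n‖ ≤ C * q ^ n := by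
  set K : ℝ := ‖α‖ + ‖β‖ + ‖γ‖ + ‖δ‖ + ‖ε‖ + 1 with hKdef
  have hK : 1 ≤ K := by
    have := norm_nonneg α; have := norm_nonneg β; have := norm_nonneg γ
    have := norm_nonneg δ; have := norm_nonneg ε
    simp only [hKdef]; linarith
  obtain ⟨N, hN⟩ := exists_nat_ge (max (K + 3) (8*q*K/(q-1)))
  have hN1 : K + 3 ≤ (N:ℝ) := le_trans (le_max_left _ _) hN
  have hN2 : 8*q*K/(q-1) ≤ (N:ℝ) := le_trans (le_max_right _ _) hN
  set C : ℝ := 1 + ∑ k ∈ Finset.range (N+2), ‖hA α β γ δ ε k‖ with hCdef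
  have hC : 0 < C := by
    have : (0:ℝ) ≤ ∑ k ∈ Finset.range (N+2), ‖hA α β γ δ ε k‖ :=
      Finset.sum_nonneg fun i _ => norm_nonneg _
    simp only [hCdef]; linarith
  refine ⟨C, hC, ?_⟩
  intro n
  induction n using Nat.strong_induction_on with
  | _ n ih =>
  have hq0 : (0:ℝ) < q := by linarith
  have hqn : (1:ℝ) ≤ q ^ n := one_le_pow₀ hq.le
  rcases lt_or_ge n (N+2) with hn | hn
  · have h1 : ‖hA α β γ δ ε n‖ ≤ ∑ k ∈ Finset.range (N+2), ‖hA α β γ δ ε k‖ :=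
      Finset.single_le_sum (fun i _ => norm_nonneg _) (Finset.mem_range.2 hn)
    calc ‖hA α β γ δ ε n‖ ≤ C := by simp only [hCdef]; linarith
    _ = C * 1 := by ring
    _ ≤ C * q ^ n := by exact mul_le_mul_of_nonneg_left hqn hC.le
  · obtain ⟨m, rfl⟩ : ∃ m, n = m + 2 := ⟨n - 2, by omega⟩
    have hmN : (N:ℝ) ≤ (m:ℝ) := by exact_mod_cast Nat.cast_le.2 (by omega)
    have hm1 : K + 3 ≤ (m:ℝ) := le_trans hN1 hmN
    have hm2 : 8*q*K ≤ (q-1)*(m:ℝ) := by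
      rw [div_le_iff₀ (by linarith : (0:ℝ) < q - 1)] at hN2
      calc 8*q*K ≤ (N:ℝ)*(q-1) := hN2
      _ = (q-1)*(N:ℝ) := by ring
      _ ≤ (q-1)*(m:ℝ) := mul_le_mul_of_nonneg_left hmN (by linarith)
    -- norm bounds
    have hXb : ‖((m : ℂ)+1)*(m : ℂ) - β*((m : ℂ)+1) - ε‖
        ≤ ((m:ℝ)+1)*(m:ℝ) + K*((m:ℝ)+1) + K := by
      have h1 : ‖((m : ℂ)+1)*(m : ℂ) - β*((m : ℂ)+1) - ε‖
          ≤ ‖((m : ℂ)+1)*(m : ℂ)‖ + ‖β*((m : ℂ)+1)‖ + ‖ε‖ :=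
        (norm_sub_le _ _).trans (by gcongr; exact norm_sub_le _ _)
      have e1 : ‖((m : ℂ)+1)*(m : ℂ)‖ = ((m:ℝ)+1)*(m:ℝ) := by
        rw [norm_mul]
        have : ((m : ℂ)+1) = ((m+1 : ℕ) : ℂ) := by push_cast; ring
        rw [this, Complex.norm_natCast, Complex.norm_natCast]; push_cast; ring
      have e2 : ‖β*((m : ℂ)+1)‖ ≤ K * ((m:ℝ)+1) := by
        rw [norm_mul]
        have : ((m : ℂ)+1) = ((m+1 : ℕ) : ℂ) := by push_cast; ring
        rw [this, Complex.norm_natCast]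
        have hβ : ‖β‖ ≤ K := by
          have := norm_nonneg α; have := norm_nonneg γ
          have := norm_nonneg δ; have := norm_nonneg ε
          simp only [hKdef]; linarith
        have : (0:ℝ) ≤ ((m+1:ℕ):ℝ) := by positivity
        calc ‖β‖ * ((m+1:ℕ):ℝ) ≤ K * ((m+1:ℕ):ℝ) := mul_le_mul_of_nonneg_right hβ this
        _ = K * ((m:ℝ)+1) := by push_cast; ring
      have e3 : ‖ε‖ ≤ K := by
        have := norm_nonneg α; have := norm_nonneg β; have := norm_nonneg γ
        have := norm_nonneg δ
        simp only [hKdef]; linarith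
      calc ‖((m : ℂ)+1)*(m : ℂ) - β*((m : ℂ)+1) - ε‖
          ≤ ‖((m : ℂ)+1)*(m : ℂ)‖ + ‖β*((m : ℂ)+1)‖ + ‖ε‖ := h1
      _ ≤ ((m:ℝ)+1)*(m:ℝ) + K*((m:ℝ)+1) + K := by rw [e1]; gcongr
    have hYb : ‖α*(m : ℂ) + δ‖ ≤ K*(m:ℝ) + K := by
      have hα : ‖α‖ ≤ K := by
        have := norm_nonneg β; have := norm_nonneg γ
        have := norm_nonneg δ; have := norm_nonneg ε
        simp only [hKdef]; linarith
      have hδ : ‖δ‖ ≤ K := by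
        have := norm_nonneg α; have := norm_nonneg β; have := norm_nonneg γ
        have := norm_nonneg ε
        simp only [hKdef]; linarith
      calc ‖α*(m : ℂ) + δ‖ ≤ ‖α*(m : ℂ)‖ + ‖δ‖ := norm_add_le _ _
      _ = ‖α‖*(m:ℝ) + ‖δ‖ := by rw [norm_mul, Complex.norm_natCast]
      _ ≤ K*(m:ℝ) + K := by gcongr
    have hZb : ((m:ℝ)+2)*((m:ℝ)+1-K) ≤ ‖((m : ℂ)+2)*(((m : ℂ)+1)+γ)‖ := by
      rw [norm_mul]
      have e1 : ‖(m : ℂ)+2‖ = (m:ℝ)+2 := by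
        have : ((m : ℂ)+2) = ((m+2 : ℕ) : ℂ) := by push_cast; ring
        rw [this, Complex.norm_natCast]; push_cast; ring
      have e2 : (m:ℝ)+1-K ≤ ‖((m : ℂ)+1)+γ‖ := by
        have h3 : ‖(m:ℂ)+1‖ ≤ ‖((m : ℂ)+1)+γ‖ + ‖γ‖ := by
          calc ‖(m:ℂ)+1‖ = ‖(((m : ℂ)+1)+γ) - γ‖ := by norm_num
          _ ≤ ‖((m : ℂ)+1)+γ‖ + ‖γ‖ := norm_sub_le _ _
        have e3 : ‖(m:ℂ)+1‖ = (m:ℝ)+1 := by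
          have : ((m : ℂ)+1) = ((m+1 : ℕ) : ℂ) := by push_cast; ring
          rw [this, Complex.norm_natCast]; push_cast; ring
        have hγK : ‖γ‖ ≤ K := by
          have := norm_nonneg α; have := norm_nonneg β
          have := norm_nonneg δ; have := norm_nonneg ε
          simp only [hKdef]; linarith
        rw [e3] at h3; linarith
      rw [e1]
      exact mul_le_mul_of_nonneg_left e2 (by positivity)
    have hkey := keyineq q K (m:ℝ) hq hK hm1 hm2
    have hZpos : 0 < ‖((m : ℂ)+2)*(((m : ℂ)+1)+γ)‖ := norm_pos_iff.2 (hden hγ m)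
    have hrecn := hrec (α := α) (β := β) (δ := δ) (ε := ε) hγ m
    have hnorm : ‖((m : ℂ)+2)*(((m : ℂ)+1)+γ)‖ * ‖hA α β γ δ ε (m+2)‖
        ≤ ‖((m : ℂ)+1)*(m : ℂ) - β*((m : ℂ)+1) - ε‖ * ‖hA α β γ δ ε (m+1)‖
          + ‖α*(m : ℂ) + δ‖ * ‖hA α β γ δ ε m‖ := by
      rw [← norm_mul, hrecn]
      exact (norm_sub_le _ _).trans (by rw [norm_mul, norm_mul])
    have ih1 := ih (m+1) (by omega)
    have ih0 := ih m (by omega)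
    have hqm : (0:ℝ) < q ^ m := pow_pos hq0 m
    -- combine
    have step : ‖((m : ℂ)+2)*(((m : ℂ)+1)+γ)‖ * ‖hA α β γ δ ε (m+2)‖
        ≤ (((m:ℝ)+1)*(m:ℝ) + K*((m:ℝ)+1) + K) * (C * q ^ (m+1))
          + (K*(m:ℝ) + K) * (C * q ^ m) := by
      calc ‖((m : ℂ)+2)*(((m : ℂ)+1)+γ)‖ * ‖hA α β γ δ ε (m+2)‖
          ≤ ‖((m : ℂ)+1)*(m : ℂ) - β*((m : ℂ)+1) - ε‖ * ‖hA α β γ δ ε (m+1)‖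
            + ‖α*(m : ℂ) + δ‖ * ‖hA α β γ δ ε m‖ := hnorm
      _ ≤ (((m:ℝ)+1)*(m:ℝ) + K*((m:ℝ)+1) + K) * (C * q ^ (m+1))
            + (K*(m:ℝ) + K) * (C * q ^ m) := by
          exact add_le_add
            (mul_le_mul hXb ih1 (norm_nonneg _) (by positivity))
            (mul_le_mul hYb ih0 (norm_nonneg _) (by positivity))
    have final : (((m:ℝ)+1)*(m:ℝ) + K*((m:ℝ)+1) + K) * (C * q ^ (m+1))
          + (K*(m:ℝ) + K) * (C * q ^ m)
        ≤ ‖((m : ℂ)+2)*(((m : ℂ)+1)+γ)‖ * (C * q ^ (m+2)) := by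
      have h5 : (((m:ℝ)+1)*(m:ℝ) + K*((m:ℝ)+1) + K) * q + (K*(m:ℝ) + K)
          ≤ q^2 * ‖((m : ℂ)+2)*(((m : ℂ)+1)+γ)‖ := by
        calc (((m:ℝ)+1)*(m:ℝ) + K*((m:ℝ)+1) + K) * q + (K*(m:ℝ) + K)
            ≤ q^2 * (((m:ℝ)+2)*((m:ℝ)+1-K)) := hkey
        _ ≤ q^2 * ‖((m : ℂ)+2)*(((m : ℂ)+1)+γ)‖ :=
            mul_le_mul_of_nonneg_left hZb (by positivity)
      have h6 := mul_le_mul_of_nonneg_right h5 (le_of_lt (mul_pos hC hqm))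
      calc (((m:ℝ)+1)*(m:ℝ) + K*((m:ℝ)+1) + K) * (C * q ^ (m+1))
            + (K*(m:ℝ) + K) * (C * q ^ m)
          = ((((m:ℝ)+1)*(m:ℝ) + K*((m:ℝ)+1) + K) * q + (K*(m:ℝ) + K)) * (C * q ^ m) := by
            ring
      _ ≤ q^2 * ‖((m : ℂ)+2)*(((m : ℂ)+1)+γ)‖ * (C * q ^ m) := h6
      _ = ‖((m : ℂ)+2)*(((m : ℂ)+1)+γ)‖ * (C * q ^ (m+2)) := by ring
    have := le_trans step final
    exact le_of_mul_le_mul_left this hZpos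

lemma master (hγ : ∀ n : ℕ, γ ≠ -(n : ℂ)) (k : ℕ) (s : ℝ) (h0 : 0 ≤ s) (h1 : s < 1) :
    Summable (fun n : ℕ => ((n:ℝ)+2)^3 * ‖hA α β γ δ ε (n+k)‖ * s^n) := by
  set q : ℝ := 2/(1+s) with hqdef
  have hq : 1 < q := by
    rw [hqdef, lt_div_iff₀ (by linarith)]; linarith
  have hqs : q*s < 1 := by
    rw [hqdef, div_mul_eq_mul_div, div_lt_one (by linarith)]; linarith
  have hqs0 : (0:ℝ) ≤ q*s := by positivity
  obtain ⟨C, hC, hCb⟩ := growth (α := α) (β := β) (δ := δ) (ε := ε) hγ q hq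
  have hnorm : ‖q*s‖ < 1 := by rw [Real.norm_of_nonneg hqs0]; exact hqs
  have h3 := summable_pow_mul_geometric_of_norm_lt_one (R := ℝ) 3 hnorm
  have h2 := summable_pow_mul_geometric_of_norm_lt_one (R := ℝ) 2 hnorm
  have h1' := summable_pow_mul_geometric_of_norm_lt_one (R := ℝ) 1 hnorm
  have h0' := summable_pow_mul_geometric_of_norm_lt_one (R := ℝ) 0 hnorm
  have hsum0 : Summable (fun n : ℕ => ((n:ℝ)+2)^3 * (q*s)^n) := by
    have := ((h3.add (h2.mul_left 6)).add (h1'.mul_left 12)).add (h0'.mul_left 8)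
    apply this.congr
    intro n; push_cast; ring
  have hsum : Summable (fun n : ℕ => (C*q^k) * (((n:ℝ)+2)^3 * (q*s)^n)) :=
    hsum0.mul_left _
  apply Summable.of_nonneg_of_le (fun n => by positivity) (fun n => ?_) hsum
  have hb := hCb (n+k)
  calc ((n:ℝ)+2)^3 * ‖hA α β γ δ ε (n+k)‖ * s^n
      ≤ ((n:ℝ)+2)^3 * (C*q^(n+k)) * s^n := by
        apply mul_le_mul_of_nonneg_right _ (by positivity)
        exact mul_le_mul_of_nonneg_left hb (by positivity)
  _ = (C*q^k) * (((n:ℝ)+2)^3 * (q*s)^n) := by rw [mul_pow, pow_add]; ring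

lemma summ_aux (hγ : ∀ n : ℕ, γ ≠ -(n : ℂ)) (k : ℕ) (c : ℕ → ℂ)
    (hc : ∀ n, ‖c n‖ ≤ ((n:ℝ)+2)^3 * ‖hA α β γ δ ε (n+k)‖) (z : ℂ) (hz : ‖z‖ < 1) :
    Summable (fun n => c n * z^n) := by
  apply Summable.of_norm_bounded (master hγ k ‖z‖ (norm_nonneg z) hz)
  intro n
  rw [norm_mul, norm_pow]
  exact mul_le_mul_of_nonneg_right (hc n) (by positivity)

noncomputable def hW (α β γ δ ε : ℂ) (z : ℂ) : ℂ := ∑' n, hA α β γ δ ε n * z^n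
noncomputable def hW1 (α β γ δ ε : ℂ) (z : ℂ) : ℂ :=
  ∑' n : ℕ, ((n:ℂ)+1) * hA α β γ δ ε (n+1) * z^n
noncomputable def hW2 (α β γ δ ε : ℂ) (z : ℂ) : ℂ :=
  ∑' n : ℕ, ((n:ℂ)+1) * ((n:ℂ)+2) * hA α β γ δ ε (n+2) * z^n

lemma norm_cast_add (n j : ℕ) : ‖((n:ℂ)+(j:ℂ))‖ = (n:ℝ)+(j:ℝ) := by
  rw [show ((n:ℂ)+(j:ℂ)) = ((n+j:ℕ):ℂ) by push_cast; ring, Complex.norm_natCast]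
  push_cast; ring

lemma hc0 : ∀ n : ℕ, ‖hA α β γ δ ε n‖ ≤ ((n:ℝ)+2)^2 * ‖hA α β γ δ ε (n+0)‖ := by
  intro n
  rw [Nat.add_zero]
  have : (1:ℝ) ≤ ((n:ℝ)+2)^2 := by nlinarith [Nat.cast_nonneg (α := ℝ) n]
  exact le_mul_of_one_le_left (norm_nonneg _) this

lemma hc1 : ∀ n : ℕ, ‖((n:ℂ)+1) * hA α β γ δ ε (n+1)‖
    ≤ ((n:ℝ)+2)^2 * ‖hA α β γ δ ε (n+1)‖ := by
  intro n
  rw [norm_mul, show ((1:ℂ)) = ((1:ℕ):ℂ) by norm_num, norm_cast_add]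
  apply mul_le_mul_of_nonneg_right _ (norm_nonneg _)
  push_cast
  nlinarith [Nat.cast_nonneg (α := ℝ) n]

lemma hc2 : ∀ n : ℕ, ‖((n:ℂ)+1) * ((n:ℂ)+2) * hA α β γ δ ε (n+2)‖
    ≤ ((n:ℝ)+2)^2 * ‖hA α β γ δ ε (n+2)‖ := by
  intro n
  rw [norm_mul, norm_mul, show ((1:ℂ)) = ((1:ℕ):ℂ) by norm_num,
    show ((2:ℂ)) = ((2:ℕ):ℂ) by norm_num, norm_cast_add, norm_cast_add]
  apply mul_le_mul_of_nonneg_right _ (norm_nonneg _)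
  push_cast
  nlinarith [Nat.cast_nonneg (α := ℝ) n]

lemma two_to_three {c : ℕ → ℂ} {k : ℕ}
    (hc : ∀ n, ‖c n‖ ≤ ((n:ℝ)+2)^2 * ‖hA α β γ δ ε (n+k)‖) :
    ∀ n : ℕ, ‖c n‖ ≤ ((n:ℝ)+2)^3 * ‖hA α β γ δ ε (n+k)‖ := by
  intro n
  refine (hc n).trans (mul_le_mul_of_nonneg_right ?_ (norm_nonneg _))
  have h2 : (0:ℝ) ≤ (n:ℝ)+2 := by positivity
  calc ((n:ℝ)+2)^2 = ((n:ℝ)+2)^2 * 1 := by ring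
  _ ≤ ((n:ℝ)+2)^2 * ((n:ℝ)+2) := by nlinarith
  _ = ((n:ℝ)+2)^3 := by ring

lemma hasDeriv_gen (hγ : ∀ n : ℕ, γ ≠ -(n : ℂ)) (k : ℕ) (c : ℕ → ℂ)
    (hc : ∀ n, ‖c n‖ ≤ ((n:ℝ)+2)^2 * ‖hA α β γ δ ε (n+k)‖)
    (x : ℝ) (hx : |x| < 1) :
    HasDerivAt (fun y : ℝ => ∑' n : ℕ, c n * (y:ℂ)^n)
      (∑' n : ℕ, ((n:ℂ)+1) * c (n+1) * (x:ℂ)^n) x := by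
  set r : ℝ := (|x|+1)/2 with hrdef
  have hr1 : |x| < r := by rw [hrdef]; linarith
  have hr2 : r < 1 := by rw [hrdef]; linarith
  have hr0 : (0:ℝ) ≤ r := le_trans (abs_nonneg x) hr1.le
  set t : Set ℝ := Ioo (-r) r with htdef
  have ht : IsOpen t := isOpen_Ioo
  have h't : IsPreconnected t := isPreconnected_Ioo
  have hxt : x ∈ t := by rw [htdef, mem_Ioo, ← abs_lt]; exact hr1
  set u : ℕ → ℝ := fun n => ((n:ℝ)+2)^3 * ‖hA α β γ δ ε (n+k)‖ * r^(n-1) with hudef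
  have hu : Summable u := by
    rw [← summable_nat_add_iff 1]
    have hM := (master (α := α) (β := β) (δ := δ) (ε := ε) hγ (k+1) r hr0 hr2).mul_left 8
    apply Summable.of_nonneg_of_le (fun n => by positivity) (fun n => ?_) hM
    have e1 : n + 1 + k = n + (k+1) := by omega
    simp only [hudef, Nat.add_sub_cancel, e1]
    push_cast
    have hA0 : (0:ℝ) ≤ ‖hA α β γ δ ε (n + (k+1))‖ * r^n := by positivity
    calc ((n:ℝ)+1+2)^3 * ‖hA α β γ δ ε (n + (k+1))‖ * r^n
        = ((n:ℝ)+1+2)^3 * (‖hA α β γ δ ε (n + (k+1))‖ * r^n) := by ring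
    _ ≤ (8*((n:ℝ)+2)^3) * (‖hA α β γ δ ε (n + (k+1))‖ * r^n) := by
        apply mul_le_mul_of_nonneg_right _ hA0
        nlinarith [Nat.cast_nonneg (α := ℝ) n, sq_nonneg ((n:ℝ)+2), sq_nonneg (n:ℝ)]
    _ = 8 * (((n:ℝ)+2)^3 * ‖hA α β γ δ ε (n + (k+1))‖ * r^n) := by ring
  have hg : ∀ (n : ℕ) (y : ℝ), y ∈ t →
      HasDerivAt (fun y : ℝ => c n * (y:ℂ)^n) ((n:ℂ) * c n * (x:ℂ)^(n-1)) y → True := fun _ _ _ _ => trivial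
  clear hg
  have hboundy : ∀ y : ℝ, y ∈ t → |y| ≤ r := by
    intro y hy
    rw [htdef, mem_Ioo, ← abs_lt] at hy
    exact hy.le
  have hgder : ∀ (n : ℕ) (y : ℝ), y ∈ t →
      HasDerivAt (fun z : ℝ => c n * (z:ℂ)^n) ((n:ℂ) * c n * (y:ℂ)^(n-1)) y := by
    intro n y _
    cases n with
    | zero => simpa using hasDerivAt_const y (c 0)
    | succ m =>
      have h := ((hasDerivAt_pow (m+1) ((y:ℝ):ℂ)).comp_ofReal).const_mul (c (m+1))
      convert h using 1
      · rfl
      push_cast [Nat.add_sub_cancel]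
      ring
  have hgbound : ∀ (n : ℕ) (y : ℝ), y ∈ t → ‖(n:ℂ) * c n * (y:ℂ)^(n-1)‖ ≤ u n := by
    intro n y hy
    rw [norm_mul, norm_mul, Complex.norm_natCast, norm_pow, Complex.norm_real,
      Real.norm_eq_abs]
    calc (n:ℝ) * ‖c n‖ * |y|^(n-1)
        ≤ (n:ℝ) * (((n:ℝ)+2)^2 * ‖hA α β γ δ ε (n+k)‖) * r^(n-1) := by
          apply mul_le_mul
          · exact mul_le_mul_of_nonneg_left (hc n) (Nat.cast_nonneg n)
          · exact pow_le_pow_left₀ (abs_nonneg y) (hboundy y hy) _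
          · positivity
          · positivity
    _ ≤ u n := by
        rw [hudef]
        apply mul_le_mul_of_nonneg_right _ (by positivity)
        have hn2 : (0:ℝ) ≤ (n:ℝ)+2 := by positivity
        calc (n:ℝ) * (((n:ℝ)+2)^2 * ‖hA α β γ δ ε (n+k)‖)
            ≤ ((n:ℝ)+2) * (((n:ℝ)+2)^2 * ‖hA α β γ δ ε (n+k)‖) := by
              apply mul_le_mul_of_nonneg_right (by linarith) (by positivity)
        _ = ((n:ℝ)+2)^3 * ‖hA α β γ δ ε (n+k)‖ := by ring
  have hg0 : Summable (fun n => c n * ((x:ℝ):ℂ)^n) := by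
    apply summ_aux hγ k c (two_to_three hc)
    rw [Complex.norm_real, Real.norm_eq_abs]; exact hx
  have main := hasDerivAt_tsum_of_isPreconnected hu ht h't hgder hgbound hxt hg0 hxt
  have hsum' : Summable (fun n : ℕ => (n:ℂ) * c n * ((x:ℝ):ℂ)^(n-1)) :=
    Summable.of_norm_bounded hu (fun n => hgbound n x hxt)
  have e : (∑' n : ℕ, (n:ℂ) * c n * ((x:ℝ):ℂ)^(n-1))
      = ∑' n : ℕ, ((n:ℂ)+1) * c (n+1) * (x:ℂ)^n := by
    rw [Summable.tsum_eq_zero_add hsum']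
    simp only [Nat.cast_zero, zero_mul, zero_add]
    apply tsum_congr
    intro n
    push_cast [Nat.add_sub_cancel]
    ring
  rw [← e]
  exact main


lemma hasSum_hW (hγ : ∀ n : ℕ, γ ≠ -(n : ℂ)) {z : ℂ} (hz : ‖z‖ < 1) :
    HasSum (fun n : ℕ => hA α β γ δ ε n * z^n) (hW α β γ δ ε z) :=
  (summ_aux hγ 0 (fun n => hA α β γ δ ε n) (two_to_three hc0) z hz).hasSum

lemma hasSum_hW1 (hγ : ∀ n : ℕ, γ ≠ -(n : ℂ)) {z : ℂ} (hz : ‖z‖ < 1) :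
    HasSum (fun n : ℕ => ((n:ℂ)+1) * hA α β γ δ ε (n+1) * z^n) (hW1 α β γ δ ε z) :=
  (summ_aux hγ 1 (fun n => ((n:ℂ)+1) * hA α β γ δ ε (n+1)) (two_to_three hc1) z hz).hasSum

lemma hasSum_hW2 (hγ : ∀ n : ℕ, γ ≠ -(n : ℂ)) {z : ℂ} (hz : ‖z‖ < 1) :
    HasSum (fun n : ℕ => ((n:ℂ)+1) * ((n:ℂ)+2) * hA α β γ δ ε (n+2) * z^n)
      (hW2 α β γ δ ε z) :=
  (summ_aux hγ 2 (fun n => ((n:ℂ)+1) * ((n:ℂ)+2) * hA α β γ δ ε (n+2))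
    (two_to_three hc2) z hz).hasSum

lemma keyODE (hγ : ∀ n : ℕ, γ ≠ -(n : ℂ)) (z : ℂ) (hz : ‖z‖ < 1) :
    (1 - z) * z * hW2 α β γ δ ε z + (α * z^2 + β * z + γ) * hW1 α β γ δ ε z
      + (δ * z + ε) * hW α β γ δ ε z = 0 := by
  have Hw := hasSum_hW (α := α) (β := β) (δ := δ) (ε := ε) hγ hz
  have Hw1 := hasSum_hW1 (α := α) (β := β) (δ := δ) (ε := ε) hγ hz
  have Hw2 := hasSum_hW2 (α := α) (β := β) (δ := δ) (ε := ε) hγ hz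
  have h1 : HasSum (fun n : ℕ => ((n:ℂ)+1)*((n:ℂ)+2)*hA α β γ δ ε (n+2) * z^(n+1))
      (z * hW2 α β γ δ ε z) := by
    have h := Hw2.mul_left z
    have e : (fun n : ℕ => ((n:ℂ)+1)*((n:ℂ)+2)*hA α β γ δ ε (n+2) * z^(n+1))
        = fun n : ℕ => z * (((n:ℂ)+1)*((n:ℂ)+2)*hA α β γ δ ε (n+2) * z^n) :=
      funext fun n => by ring
    rw [e]; exact h
  have h2 : HasSum (fun n : ℕ => (n:ℂ)*((n:ℂ)+1)*hA α β γ δ ε (n+1) * z^(n+1))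
      (z^2 * hW2 α β γ δ ε z) := by
    set f : ℕ → ℂ := fun n => (n:ℂ)*((n:ℂ)+1)*hA α β γ δ ε (n+1) * z^(n+1) with hfdef
    have h := Hw2.mul_left (z^2)
    have e : (fun n : ℕ => f (n+1))
        = fun n : ℕ => z^2 * (((n:ℂ)+1)*((n:ℂ)+2)*hA α β γ δ ε (n+2) * z^n) :=
      funext fun n => by simp only [hfdef]; push_cast; ring
    have h' : HasSum (fun n : ℕ => f (n+1)) (z^2 * hW2 α β γ δ ε z) := by rw [e]; exact h
    have h'' := (hasSum_nat_add_iff (f := f) 1).1 h'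
    simpa [hfdef] using h''
  have h3 : HasSum (fun n : ℕ => α*(n:ℂ)*hA α β γ δ ε n * z^(n+1))
      (α * z^2 * hW1 α β γ δ ε z) := by
    set f : ℕ → ℂ := fun n => α*(n:ℂ)*hA α β γ δ ε n * z^(n+1) with hfdef
    have h := Hw1.mul_left (α*z^2)
    have e : (fun n : ℕ => f (n+1))
        = fun n : ℕ => α*z^2 * (((n:ℂ)+1)*hA α β γ δ ε (n+1) * z^n) :=
      funext fun n => by simp only [hfdef]; push_cast; ring
    have h' : HasSum (fun n : ℕ => f (n+1)) (α*z^2 * hW1 α β γ δ ε z) := by rw [e]; exact h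
    have h'' := (hasSum_nat_add_iff (f := f) 1).1 h'
    simpa [hfdef] using h''
  have h4 : HasSum (fun n : ℕ => β*((n:ℂ)+1)*hA α β γ δ ε (n+1) * z^(n+1))
      (β * z * hW1 α β γ δ ε z) := by
    have h := Hw1.mul_left (β*z)
    have e : (fun n : ℕ => β*((n:ℂ)+1)*hA α β γ δ ε (n+1) * z^(n+1))
        = fun n : ℕ => β*z * (((n:ℂ)+1)*hA α β γ δ ε (n+1) * z^n) :=
      funext fun n => by ring
    rw [e]; exact h
  have h5 : HasSum (fun n : ℕ => γ*((n:ℂ)+2)*hA α β γ δ ε (n+2) * z^(n+1))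
      (γ * hW1 α β γ δ ε z - γ * hA α β γ δ ε 1) := by
    set f : ℕ → ℂ := fun n => γ*((n:ℂ)+1)*hA α β γ δ ε (n+1) * z^n with hfdef
    have h : HasSum f (γ * hW1 α β γ δ ε z) := by
      have h := Hw1.mul_left γ
      have e : f = fun n : ℕ => γ * (((n:ℂ)+1)*hA α β γ δ ε (n+1) * z^n) :=
        funext fun n => by simp only [hfdef]; ring
      rw [e]; exact h
    have h' := (hasSum_nat_add_iff' (f := f) 1).2 h
    have e2 : (fun n : ℕ => f (n+1))
        = fun n : ℕ => γ*((n:ℂ)+2)*hA α β γ δ ε (n+2) * z^(n+1) :=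
      funext fun n => by simp only [hfdef]; push_cast; ring
    rw [e2] at h'
    simpa [hfdef] using h'
  have h6 : HasSum (fun n : ℕ => δ*hA α β γ δ ε n * z^(n+1))
      (δ * z * hW α β γ δ ε z) := by
    have h := Hw.mul_left (δ*z)
    have e : (fun n : ℕ => δ*hA α β γ δ ε n * z^(n+1))
        = fun n : ℕ => δ*z * (hA α β γ δ ε n * z^n) :=
      funext fun n => by ring
    rw [e]; exact h
  have h7 : HasSum (fun n : ℕ => ε*hA α β γ δ ε (n+1) * z^(n+1))
      (ε * hW α β γ δ ε z - ε * hA α β γ δ ε 0) := by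
    set f : ℕ → ℂ := fun n => ε*hA α β γ δ ε n * z^n with hfdef
    have h : HasSum f (ε * hW α β γ δ ε z) := by
      have h := Hw.mul_left ε
      have e : f = fun n : ℕ => ε * (hA α β γ δ ε n * z^n) :=
        funext fun n => by simp only [hfdef]; ring
      rw [e]; exact h
    have h' := (hasSum_nat_add_iff' (f := f) 1).2 h
    simpa [hfdef] using h'
  set F : ℕ → ℂ := fun n =>
    ((n:ℂ)+1)*((n:ℂ)+2)*hA α β γ δ ε (n+2) * z^(n+1)
      - (n:ℂ)*((n:ℂ)+1)*hA α β γ δ ε (n+1) * z^(n+1)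
      + α*(n:ℂ)*hA α β γ δ ε n * z^(n+1)
      + β*((n:ℂ)+1)*hA α β γ δ ε (n+1) * z^(n+1)
      + γ*((n:ℂ)+2)*hA α β γ δ ε (n+2) * z^(n+1)
      + δ*hA α β γ δ ε n * z^(n+1)
      + ε*hA α β γ δ ε (n+1) * z^(n+1) with hF
  have tot : HasSum F
      (z * hW2 α β γ δ ε z - z ^ 2 * hW2 α β γ δ ε z + α * z ^ 2 * hW1 α β γ δ ε z
        + β * z * hW1 α β γ δ ε z + (γ * hW1 α β γ δ ε z - γ * hA α β γ δ ε 1)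
        + δ * z * hW α β γ δ ε z + (ε * hW α β γ δ ε z - ε * hA α β γ δ ε 0)) :=
    (((((h1.sub h2).add h3).add h4).add h5).add h6).add h7
  have hFz : F = fun _ : ℕ => (0:ℂ) := by
    funext n
    simp only [hF]
    have hr := hrec (α := α) (β := β) (δ := δ) (ε := ε) hγ n
    linear_combination z^(n+1) * hr
  rw [hFz] at tot
  have hS := tot.unique hasSum_zero
  have hbase : γ * hA α β γ δ ε 1 + ε * hA α β γ δ ε 0 = 0 := by
    have hγ0' := hγ0 (γ := γ) hγ
    simp only [hA]
    field_simp
    ring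
  linear_combination hS + hbase


lemma hW_zero : hW α β γ δ ε 0 = 1 := by
  rw [hW, tsum_eq_single 0 (fun n hn => by simp [zero_pow hn])]
  simp [hA]

lemma hW1_zero : hW1 α β γ δ ε 0 = hA α β γ δ ε 1 := by
  rw [hW1, tsum_eq_single 0 (fun n hn => by simp [zero_pow hn])]
  simp

lemma hW2_zero : hW2 α β γ δ ε 0 = 2 * hA α β γ δ ε 2 := by
  rw [hW2, tsum_eq_single 0 (fun n hn => by simp [zero_pow hn])]
  simp

end HeunFro

open HeunFro in
/-- Existence of the Frobenius solution of the Heun equation normalized at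
the regular singular point `x = 0` (indicial root `0`), analytic on `(-1,1)`, with the
stated values of `v 0`, `v' 0` and `v'' 0`, provided `γ` is not a nonpositive integer. -/
theorem stmt_1 (α β γ δ ε : ℂ) (hγ : ∀ n : ℕ, γ ≠ -(n : ℂ)) :
    ∃ v : ℝ → ℂ,
      (∃ p : FormalMultilinearSeries ℝ ℝ ℂ, HasFPowerSeriesOnBall v p 0 1) ∧
      (∀ x ∈ Ioo (-1 : ℝ) 1,
        (1 - (x : ℂ)) * (x : ℂ) * deriv (deriv v) x
          + (α * (x : ℂ) ^ 2 + β * (x : ℂ) + γ) * deriv v x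
          + (δ * (x : ℂ) + ε) * v x = 0) ∧
      v 0 = 1 ∧ deriv v 0 = -ε / γ ∧
      deriv (deriv v) 0 = 1 / (1 + γ) * ((ε / γ) * (β + ε) - δ) := by
  classical
  set v : ℝ → ℂ := fun x => hW α β γ δ ε (x:ℂ) with hvdef
  have hnormR : ∀ x : ℝ, ‖((x:ℝ):ℂ)‖ = |x| := fun x => by
    rw [Complex.norm_real, Real.norm_eq_abs]
  -- derivatives
  have hder1 : ∀ x : ℝ, |x| < 1 → HasDerivAt v (hW1 α β γ δ ε (x:ℂ)) x := by
    intro x hx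
    exact hasDeriv_gen hγ 0 (fun n => hA α β γ δ ε n) hc0 x hx
  have hder2 : ∀ x : ℝ, |x| < 1 →
      HasDerivAt (fun y : ℝ => hW1 α β γ δ ε (y:ℂ)) (hW2 α β γ δ ε (x:ℂ)) x := by
    intro x hx
    have h := hasDeriv_gen hγ 1 (fun n => ((n:ℂ)+1) * hA α β γ δ ε (n+1)) hc1 x hx
    have e : (∑' n : ℕ, ((n:ℂ)+1) * ((((n+1:ℕ):ℂ)+1) * hA α β γ δ ε ((n+1)+1)) * (x:ℂ)^n)
        = hW2 α β γ δ ε (x:ℂ) := by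
      rw [hW2]
      apply tsum_congr
      intro n
      push_cast
      ring
    rw [← e]
    exact h
  have habs : ∀ x ∈ Ioo (-1:ℝ) 1, |x| < 1 := fun x hx => abs_lt.2 ⟨hx.1, hx.2⟩
  have hd1 : ∀ x ∈ Ioo (-1:ℝ) 1, deriv v x = hW1 α β γ δ ε (x:ℂ) :=
    fun x hx => (hder1 x (habs x hx)).deriv
  have hdd : ∀ x ∈ Ioo (-1:ℝ) 1, deriv (deriv v) x = hW2 α β γ δ ε (x:ℂ) := by
    intro x hx
    have hev : deriv v =ᶠ[nhds x] (fun y : ℝ => hW1 α β γ δ ε (y:ℂ)) := by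
      filter_upwards [isOpen_Ioo.mem_nhds hx] with y hy
      exact hd1 y hy
    rw [hev.deriv_eq]
    exact (hder2 x (habs x hx)).deriv
  refine ⟨v, ?_, ?_, ?_, ?_, ?_⟩
  · -- power series
    refine ⟨fun n => ContinuousMultilinearMap.mkPiRing ℝ (Fin n) (hA α β γ δ ε n), ?_⟩
    constructor
    · -- radius
      apply ENNReal.le_of_forall_nnreal_lt
      intro r hr
      have hr1 : (r:ℝ) < 1 := by exact_mod_cast hr
      have hr0 : (0:ℝ) ≤ (r:ℝ) := r.coe_nonneg
      set q : ℝ := 2/(1+(r:ℝ)) with hqdef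
      have hq : 1 < q := by rw [hqdef, lt_div_iff₀ (by linarith)]; linarith
      have hqr : q*(r:ℝ) < 1 := by
        rw [hqdef, div_mul_eq_mul_div, div_lt_one (by linarith)]; linarith
      obtain ⟨C, hC, hCb⟩ := growth (α := α) (β := β) (δ := δ) (ε := ε) hγ q hq
      apply FormalMultilinearSeries.le_radius_of_bound _ C
      intro n
      rw [ContinuousMultilinearMap.norm_mkPiRing]
      calc ‖hA α β γ δ ε n‖ * (r:ℝ)^n ≤ (C * q^n) * (r:ℝ)^n :=
          mul_le_mul_of_nonneg_right (hCb n) (by positivity)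
      _ = C * (q*(r:ℝ))^n := by rw [mul_pow]; ring
      _ ≤ C * 1 := by
          apply mul_le_mul_of_nonneg_left _ hC.le
          exact pow_le_one₀ (by positivity) hqr.le
      _ = C := by ring
    · norm_num
    · intro y hy
      have hylt : ‖y‖ < 1 := by
        have := EMetric.mem_ball.1 hy
        rw [edist_zero_right, enorm_eq_nnnorm] at this
        exact_mod_cast this
      have hz : ‖((y:ℝ):ℂ)‖ < 1 := by rw [hnormR]; rwa [← Real.norm_eq_abs]
      have hs := hasSum_hW (α := α) (β := β) (δ := δ) (ε := ε) hγ hz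
      have e : (fun n => ContinuousMultilinearMap.mkPiRing ℝ (Fin n) (hA α β γ δ ε n)
          fun _ => y) = fun n : ℕ => hA α β γ δ ε n * ((y:ℝ):ℂ)^n := by
        funext n
        rw [ContinuousMultilinearMap.mkPiRing_apply]
        simp [Complex.real_smul, Complex.ofReal_pow, mul_comm]
      rw [e, zero_add]
      exact hs
  · -- ODE
    intro x hx
    rw [hdd x hx, hd1 x hx]
    have hz : ‖((x:ℝ):ℂ)‖ < 1 := by rw [hnormR]; exact habs x hx
    exact keyODE hγ (x:ℂ) hz
  · -- v 0 = 1
    simp only [hvdef, Complex.ofReal_zero]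
    exact hW_zero
  · -- deriv v 0 = -ε/γ
    have h0 : (0:ℝ) ∈ Ioo (-1:ℝ) 1 := by norm_num
    rw [hd1 0 h0]
    rw [Complex.ofReal_zero, hW1_zero]
    simp [hA]
  · -- second derivative at 0
    have h0 : (0:ℝ) ∈ Ioo (-1:ℝ) 1 := by norm_num
    rw [hdd 0 h0, Complex.ofReal_zero, hW2_zero]
    have hγ0' := hγ0 (γ := γ) hγ
    have h1γ : (1:ℂ) + γ ≠ 0 := by
      intro h
      apply hγ 1
      push_cast
      linear_combination h
    simp only [hA]
    push_cast
    field_simp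
    simp only [zero_add]
    field_simp
    ring
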